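/- arXiv:1611.10110 — 7 statements merged into one kernel-verified Lean document; each statement's English description precedes it below -/
import Mathlib

section
/- Let h, d, s be natural numbers with d ≤ h and 1 ≤ s ≤ h. Then the number of integers k with 0 ≤ k ≤ s−1 such that ∑_{j=0}^{k} C(d, s−j)·C(h−d, j) = C(h, s) is equal to max(s + d − h, 0). -/
open Finset

theorem Finset.sum_range_eq_sum_range_iff {M : Type*} [AddCommMonoid M] [PartialOrder M]
    [CanonicallyOrderedAdd M] [IsLeftCancelAdd M] {f : ℕ → M} {k n : ℕ} (hkn : k ≤ n) :
    ∑ j ∈ range k, f j = ∑ j ∈ range n, f j ↔ ∀ j ∈ Ico k n, f j = 0 := by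
  rw [← sum_range_add_sum_Ico f hkn, eq_comm, add_eq_left, sum_eq_zero_iff]

theorem Nat.sum_range_choose_mul_choose_eq_choose {h d : ℕ} (hdh : d ≤ h) (s : ℕ) :
    ∑ j ∈ range (s + 1), d.choose (s - j) * (h - d).choose j = h.choose s := by
  rw [← Nat.sub_add_cancel hdh, Nat.add_choose_eq, Nat.sub_add_cancel hdh,
    Nat.sum_antidiagonal_eq_sum_range_succ_mk]
  exact sum_congr rfl fun j _ => mul_comm _ _

theorem card_filter_sum_choose_eq_choose_general
    (h d s : ℕ) (hdh : d ≤ h) (hsh : s ≤ h) :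
    ((Finset.range s).filter fun k =>
        ∑ j ∈ Finset.range (k + 1), Nat.choose d (s - j) * Nat.choose (h - d) j
          = Nat.choose h s).card = s + d - h := by
  -- Beyond `h - d` the summand vanishes, while at `min s (h - d)` it does not.
  have partial_sum_eq_iff : ∀ k < s,
      ∑ j ∈ range (k + 1), d.choose (s - j) * (h - d).choose j = h.choose s ↔
        min s (h - d) ≤ k := by
    intro k hk
    rw [← Nat.sum_range_choose_mul_choose_eq_choose hdh, sum_range_eq_sum_range_iff (by omega)]
    constructor
    · intro hvanish
      by_contra! hlt
      have hpos : 0 < d.choose (s - min s (h - d)) * (h - d).choose (min s (h - d)) :=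
        Nat.mul_pos (Nat.choose_pos (by omega)) (Nat.choose_pos (by omega))
      exact hpos.ne' (hvanish _ (mem_Ico.2 (by omega)))
    · intro hk' j hj
      rw [mem_Ico] at hj
      rw [Nat.choose_eq_zero_of_lt (show h - d < j by omega), mul_zero]
  have hfilter : (range s).filter (fun k =>
      ∑ j ∈ range (k + 1), d.choose (s - j) * (h - d).choose j = h.choose s) =
        Ico (min s (h - d)) s := by
    ext k
    simp only [mem_filter, mem_range, mem_Ico]
    exact ⟨fun ⟨hk, heq⟩ => ⟨(partial_sum_eq_iff k hk).1 heq, hk⟩,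
      fun ⟨hk', hk⟩ => ⟨hk, (partial_sum_eq_iff k hk).2 hk'⟩⟩
  rw [hfilter, Nat.card_Ico]
  omega

/-- Let `h, d, s` be natural numbers with `d ≤ h` and `1 ≤ s ≤ h`.
The number of integers `k` with `0 ≤ k ≤ s - 1` such that
`∑_{j=0}^{k} C(d, s-j)·C(h-d, j) = C(h, s)` equals `max (s + d - h) 0`
(which, with truncated subtraction on `ℕ`, is `s + d - h`). -/
theorem card_filter_sum_choose_eq_choose
    (h d s : ℕ) (hdh : d ≤ h) (hs1 : 1 ≤ s) (hsh : s ≤ h) :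
    ((Finset.range s).filter fun k =>
        ∑ j ∈ Finset.range (k + 1), Nat.choose d (s - j) * Nat.choose (h - d) j
          = Nat.choose h s).card = s + d - h :=
  card_filter_sum_choose_eq_choose_general h d s hdh hsh
end

section
/- Let R be a discrete valuation ring with uniformizer π, let M be a free R-module of finite rank, and let Fil⁰ ⊆ Fil¹ ⊆ ⋯ ⊆ Fil^r = M be a chain of submodules with π·Fil^i ⊆ Fil^{i−1} for 1 ≤ i ≤ r. Fix s ≥ 1, and for 0 ≤ i ≤ r−1, 0 ≤ j < s define Fil^{[is+j]}(⋀^s M) ⊆ ⋀^s M as the image of the canonical map ⋀^{s−j} Fil^i ⊗_R ⋀^{j} Fil^{i+1} → ⋀^s M induced by the inclusions into M and the wedge product, and set Fil^{[rs]}(⋀^s M) = ⋀^s M. Then Fil^{[l−1]}(⋀^s M) ⊆ Fil^{[l]}(⋀^s M) and π·Fil^{[l]}(⋀^s M) ⊆ Fil^{[l−1]}(⋀^s M) for all 1 ≤ l ≤ rs. -/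
/-!
Write `l - 1 = i s + j` with `j < s`. Then `Fil^{[l]} = (Fil^i)^{s-j-1} (Fil^{i+1})^{j+1}`, also
when `j + 1 = s`, where both sides are `(Fil^{i+1})^s`. So passing from `l - 1` to `l` replaces one
factor `Fil^i` by `Fil^{i+1}`, and both claims follow from `Fil^i ≤ Fil^{i+1}` and
`π Fil^{i+1} ≤ Fil^i`, since a scalar can be moved onto any factor of a product of submodules.
-/

open Pointwise

theorem Nat.div_mod_succ_of_mod_add_one_lt {n s : ℕ} (h : n % s + 1 < s) :
    (n + 1) / s = n / s ∧ (n + 1) % s = n % s + 1 :=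
  (Nat.div_mod_unique (by omega)).2 ⟨by have := Nat.mod_add_div n s; omega, h⟩

theorem Nat.div_mod_succ_of_mod_add_one_eq {n s : ℕ} (h : n % s + 1 = s) :
    (n + 1) / s = n / s + 1 ∧ (n + 1) % s = 0 :=
  (Nat.div_mod_unique (by omega)).2
    ⟨by have := Nat.mod_add_div n s; rw [Nat.mul_add]; omega, by omega⟩

theorem pow_sub_mod_mul_pow_mod_succ {X : Type*} [Monoid X] (f : ℕ → X) {s : ℕ} (hs : 0 < s)
    (n : ℕ) :
    f ((n + 1) / s) ^ (s - (n + 1) % s) * f ((n + 1) / s + 1) ^ ((n + 1) % s) =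
      f (n / s) ^ (s - (n % s + 1)) * f (n / s + 1) ^ (n % s + 1) := by
  rcases Nat.lt_or_ge (n % s + 1) s with h | h
  · obtain ⟨hq, hr⟩ := Nat.div_mod_succ_of_mod_add_one_lt h
    rw [hq, hr]
  · have h : n % s + 1 = s := h.antisymm' (Nat.mod_lt n hs)
    obtain ⟨hq, hr⟩ := Nat.div_mod_succ_of_mod_add_one_eq h
    simp [hq, hr, h]

section
variable {R A : Type*} [CommSemiring R] [Semiring A] [Algebra R A] {a b : Submodule R A}

theorem Submodule.pow_sub_mul_pow_le_pow_sub_succ_mul_pow_succ (hab : a ≤ b) {s j : ℕ}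
    (hj : j < s) : a ^ (s - j) * b ^ j ≤ a ^ (s - (j + 1)) * b ^ (j + 1) := by
  calc a ^ (s - j) * b ^ j = a ^ (s - (j + 1)) * a * b ^ j := by
        rw [← pow_succ, show s - (j + 1) + 1 = s - j by omega]
    _ ≤ a ^ (s - (j + 1)) * b * b ^ j := by gcongr
    _ = a ^ (s - (j + 1)) * b ^ (j + 1) := by rw [mul_assoc, ← pow_succ']

theorem Submodule.smul_pow_sub_succ_mul_pow_succ_le (π : R) (hπ : π • b ≤ a) {s j : ℕ}
    (hj : j < s) : π • (a ^ (s - (j + 1)) * b ^ (j + 1)) ≤ a ^ (s - j) * b ^ j := by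
  calc π • (a ^ (s - (j + 1)) * b ^ (j + 1)) = a ^ (s - (j + 1)) * (π • b) * b ^ j := by
        rw [pow_succ', ← mul_assoc, mul_smul_comm, smul_mul_assoc]
    _ ≤ a ^ (s - (j + 1)) * a * b ^ j := by gcongr
    _ = a ^ (s - j) * b ^ j := by
        rw [← pow_succ, show s - (j + 1) + 1 = s - j by omega]
end

theorem filtration_exteriorPower_chain_general
    {R : Type*} [CommRing R]
    (π : R)
    {M : Type*} [AddCommGroup M] [Module R M]
    (r : ℕ) (Fil : ℕ → Submodule R M)
    (hmono : ∀ i, i < r → Fil i ≤ Fil (i + 1))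
    (hsm : ∀ i, 1 ≤ i → i ≤ r → π • Fil i ≤ Fil (i - 1))
    (s : ℕ) (hs : 1 ≤ s)
    (FilW : ℕ → Submodule R (ExteriorAlgebra R M))
    (hFilW : ∀ l, FilW l =
      (Submodule.map (ExteriorAlgebra.ι R) (Fil (l / s))) ^ (s - l % s) *
        (Submodule.map (ExteriorAlgebra.ι R) (Fil (l / s + 1))) ^ (l % s))
    (l : ℕ) (hl1 : 1 ≤ l) (hl2 : l ≤ r * s) :
    FilW (l - 1) ≤ FilW l ∧ π • FilW l ≤ FilW (l - 1) := by
  obtain ⟨n, rfl⟩ : ∃ n, l = n + 1 := ⟨l - 1, by omega⟩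
  have hj : n % s < s := Nat.mod_lt n hs
  have hi : n / s < r := (Nat.div_lt_iff_lt_mul hs).2 (by omega)
  rw [Nat.add_sub_cancel, hFilW, hFilW,
    pow_sub_mod_mul_pow_mod_succ (fun i ↦ (Fil i).map (ExteriorAlgebra.ι R)) hs]
  refine ⟨Submodule.pow_sub_mul_pow_le_pow_sub_succ_mul_pow_succ
    (Submodule.map_mono (hmono _ hi)) hj, Submodule.smul_pow_sub_succ_mul_pow_succ_le π ?_ hj⟩
  rw [← Submodule.map_pointwise_smul]
  exact Submodule.map_mono (hsm (n / s + 1) (Nat.le_add_left 1 _) hi)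

/-- Let `R` be a DVR with uniformizer `π`, `M` a free `R`-module of finite
rank, and `Fil⁰ ⊆ Fil¹ ⊆ ⋯ ⊆ Fil^r = M` a chain of submodules with `π·Fil^i ⊆ Fil^{i-1}`
(we extend the chain by `Fil^i = M` for `i ≥ r`).  Fix `s ≥ 1` and for `l = i·s + j`
(`0 ≤ i ≤ r-1`, `0 ≤ j < s`, i.e. `i = l / s`, `j = l % s`) let
`Fil^{[l]}(⋀^s M) := image of ⋀^{s-j} Fil^i ⊗ ⋀^{j} Fil^{i+1} → ⋀^s M`, realized as the
submodule product `(ι Fil^i)^{s-j} * (ι Fil^{i+1})^{j}` in the exterior algebra; for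
`l = r·s` this formula gives `Fil^{[rs]}(⋀^s M) = ⋀^s M`.  Then for `1 ≤ l ≤ r·s` one has
`Fil^{[l-1]} ⊆ Fil^{[l]}` and `π·Fil^{[l]} ⊆ Fil^{[l-1]}`. -/
theorem filtration_exteriorPower_chain
    {R : Type*} [CommRing R] [IsDomain R] [IsDiscreteValuationRing R]
    (π : R) (hπ : Irreducible π)
    {M : Type*} [AddCommGroup M] [Module R M] [Module.Free R M] [Module.Finite R M]
    (r : ℕ) (hr : 1 ≤ r) (Fil : ℕ → Submodule R M)
    (hmono : ∀ i, i < r → Fil i ≤ Fil (i + 1))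
    (htop : ∀ i, r ≤ i → Fil i = ⊤)
    (hsm : ∀ i, 1 ≤ i → i ≤ r → π • Fil i ≤ Fil (i - 1))
    (s : ℕ) (hs : 1 ≤ s)
    (FilW : ℕ → Submodule R (ExteriorAlgebra R M))
    (hFilW : ∀ l, FilW l =
      (Submodule.map (ExteriorAlgebra.ι R) (Fil (l / s))) ^ (s - l % s) *
        (Submodule.map (ExteriorAlgebra.ι R) (Fil (l / s + 1))) ^ (l % s))
    (l : ℕ) (hl1 : 1 ≤ l) (hl2 : l ≤ r * s) :
    FilW (l - 1) ≤ FilW l ∧ π • FilW l ≤ FilW (l - 1) :=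
  filtration_exteriorPower_chain_general π r Fil hmono hsm s hs FilW hFilW l hl1 hl2
end

section
/- Let R be a discrete valuation ring with uniformizer π, let M be a free R-module of finite rank, and let N ⊆ M be a submodule with π·M ⊆ N such that the R-module M/N has length f. Then for every natural number d and every x ∈ ⋀^d M, the element π^{min(d,f)}·x lies in the image of the canonical map ⋀^d N → ⋀^d M. -/
open Pointwise

/-- An `R`-module `P` has length `n` iff it admits a composition series from `⊥` to `⊤`
of length `n`. -/
def ModuleLengthEq (R : Type*) [Ring R] (P : Type*) [AddCommGroup P] [Module R P]
    (n : ℕ) : Prop :=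
  ∃ s : CompositionSeries (Submodule R P), s.head = ⊥ ∧ s.last = ⊤ ∧ s.length = n

/-!
Lift generators of `M ⧸ N` to `w₁, …, w_f ∈ M`, so that `range ι = A ⊔ B` with `A = ι N` and
`B = ι (span w)`. Degree-one submodules of the exterior algebra commute, so the binomial
theorem gives `⋀^d M = (A ⊔ B)^d = ∑ Aⁱ Bʲ` over `i + j = d`. Here `Bʲ = 0` for `j > f`, since
a product of more than `f` of the `wₖ` repeats one of them, while `πʲ Bʲ ⊆ Aʲ` as `π M ⊆ N`.
-/

namespace Submodule

variable {R P : Type*} [Ring R] [AddCommGroup P] [Module R P]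

theorem eq_sup_span_singleton_of_covBy {S T : Submodule R P} (h : S ⋖ T) {y : P}
    (hyT : y ∈ T) (hyS : y ∉ S) : T = S ⊔ R ∙ y := by
  have hle : S ⊔ R ∙ y ≤ T := sup_le h.le ((span_singleton_le_iff_mem _ _).2 hyT)
  refine ((h.eq_or_eq le_sup_left hle).resolve_left fun hS => hyS ?_).symm
  exact hS ▸ mem_sup_right (mem_span_singleton_self y)

end Submodule

open Submodule in
theorem CompositionSeries.exists_last_eq_head_sup_span {R P : Type*} [Ring R] [AddCommGroup P]
    [Module R P] (s : CompositionSeries (Submodule R P)) {n : ℕ} (hn : s.length = n) :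
    ∃ v : Fin n → P, s.last = s.head ⊔ span R (Set.range v) := by
  induction s using RelSeries.inductionOn generalizing n with
  | singleton S =>
    obtain rfl : n = 0 := hn.symm
    exact ⟨Fin.elim0, by simp⟩
  | cons s S hS ih =>
    obtain ⟨v, hv⟩ := ih rfl
    obtain ⟨y, hyT, hyS⟩ := SetLike.exists_of_lt hS.lt
    obtain rfl : n = s.length + 1 := by simp only [RelSeries.cons_length] at hn; omega
    refine ⟨Fin.cons y v, ?_⟩
    rw [RelSeries.last_cons, RelSeries.head_cons, hv, eq_sup_span_singleton_of_covBy hS hyT hyS,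
      Fin.range_cons, span_insert, sup_assoc]

open Submodule in
theorem ModuleLengthEq.exists_sup_span_eq_top {R M : Type*} [Ring R] [AddCommGroup M]
    [Module R M] {N : Submodule R M} {n : ℕ} (h : ModuleLengthEq R (M ⧸ N) n) :
    ∃ w : Fin n → M, N ⊔ span R (Set.range w) = ⊤ := by
  obtain ⟨s, hhead, hlast, hn⟩ := h
  obtain ⟨v, hv⟩ := s.exists_last_eq_head_sup_span hn
  choose w hw using fun i => N.mkQ_surjective (v i)
  refine ⟨w, (map_mkQ_eq_top _ _).1 ?_⟩
  rw [map_span, ← Set.range_comp, show N.mkQ ∘ w = v from funext hw, ← hlast, hv, hhead,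
    bot_sup_eq]

namespace Submodule

variable {R E : Type*} [CommSemiring R] [Semiring E] [Algebra R E]

theorem pow_smul_mem_pow {A B : Submodule R E} {r : R} (h : ∀ b ∈ B, r • b ∈ A) {n : ℕ}
    {y : E} (hy : y ∈ B ^ n) : r ^ n • y ∈ A ^ n := by
  induction n generalizing y with
  | zero => simpa using hy
  | succ n ih =>
    rw [pow_succ'] at hy
    rw [pow_succ' A]
    refine Submodule.mul_induction_on hy (fun b hb z hz => ?_) fun u v hu hv => ?_
    · rw [pow_succ', ← smul_mul_smul_comm]
      exact mul_mem_mul (h b hb) (ih hz)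
    · rw [smul_add]; exact add_mem hu hv

theorem pow_smul_mem_pow_of_commute {A B : Submodule R E} (hAB : Commute A B) {r : R}
    (h : ∀ b ∈ B, r • b ∈ A) {f : ℕ} (hB : B ^ (f + 1) = ⊥) {d : ℕ} {y : E}
    (hy : y ∈ (A ⊔ B) ^ d) : r ^ min d f • y ∈ A ^ d := by
  rw [← add_eq_sup, hAB.add_pow'] at hy
  refine Finset.sum_induction _ (· ≤ (A ^ d).comap (LinearMap.lsmul R E (r ^ min d f)))
    (fun _ _ => add_le) zero_le (fun ij hij => ?_) hy
  rw [Finset.HasAntidiagonal.mem_antidiagonal] at hij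
  rw [nsmul_eq_self (Nat.choose_pos (hij ▸ Nat.le_add_right _ _)).ne']
  rcases le_or_gt ij.2 f with hf | hf
  · refine mul_le.2 fun a ha b hb => ?_
    have hj : ij.2 ≤ min d f := le_min (hij ▸ Nat.le_add_left _ _) hf
    have hab : a * (r ^ ij.2 • b) ∈ A ^ d := hij ▸ pow_add A ij.1 ij.2 ▸
      mul_mem_mul ha (pow_smul_mem_pow h hb)
    rw [mem_comap, LinearMap.lsmul_apply, ← Nat.sub_add_cancel hj, pow_add, mul_smul,
      ← mul_smul_comm]
    exact smul_mem _ _ hab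
  · rw [pow_eq_zero_of_le hf hB, mul_zero]
    exact zero_le

end Submodule

namespace ExteriorAlgebra

variable {R M : Type*} [CommRing R] [AddCommGroup M] [Module R M]

theorem map_ι_mul_map_ι_le (P Q : Submodule R M) :
    P.map (ι R) * Q.map (ι R) ≤ Q.map (ι R) * P.map (ι R) := by
  refine Submodule.mul_le.2 ?_
  rintro _ ⟨p, hp, rfl⟩ _ ⟨q, hq, rfl⟩
  rw [eq_neg_of_add_eq_zero_left (ι_add_mul_swap p q)]
  exact neg_mem (Submodule.mul_mem_mul ⟨q, hq, rfl⟩ ⟨p, hp, rfl⟩)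

theorem commute_map_ι (P Q : Submodule R M) : Commute (P.map (ι R)) (Q.map (ι R)) :=
  (map_ι_mul_map_ι_le P Q).antisymm (map_ι_mul_map_ι_le Q P)

theorem map_ι_span_range_pow_eq_bot {n : ℕ} (w : Fin n → M) :
    (Submodule.span R (Set.range w)).map (ι R) ^ (n + 1) = ⊥ := by
  rw [Submodule.map_span, ← Set.range_comp, Submodule.span_pow, Submodule.span_eq_bot]
  intro y hy
  obtain ⟨g, rfl⟩ := Set.mem_pow.1 hy
  choose k hk using fun i => (g i).2
  rw [show (fun i => (g i : ExteriorAlgebra R M)) = fun i => ι R (w (k i)) from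
    funext fun i => (hk i).symm, ← ιMulti_apply]
  exact ιMulti_eq_zero_of_not_inj fun hinj =>
    (Fintype.card_le_of_injective k hinj.of_comp).not_gt (by simp)

end ExteriorAlgebra

theorem pow_uniformizer_smul_mem_exteriorPower_image_general
    {R : Type*} [CommRing R]
    (π : R)
    {M : Type*} [AddCommGroup M] [Module R M]
    (N : Submodule R M) (hπM : ∀ x : M, π • x ∈ N)
    (f : ℕ) (hlen : ModuleLengthEq R (M ⧸ N) f)
    (d : ℕ) (x : ExteriorAlgebra R M) (hx : x ∈ ⋀[R]^d M) :
    π ^ min d f • x ∈ (Submodule.map (ExteriorAlgebra.ι R) N) ^ d := by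
  obtain ⟨w, hw⟩ := hlen.exists_sup_span_eq_top
  have hx' : x ∈ (N.map (ExteriorAlgebra.ι R) ⊔
      (Submodule.span R (Set.range w)).map (ExteriorAlgebra.ι R)) ^ d := by
    rwa [← Submodule.map_sup, hw, Submodule.map_top]
  have hπ : ∀ b ∈ (Submodule.span R (Set.range w)).map (ExteriorAlgebra.ι R),
      π • b ∈ N.map (ExteriorAlgebra.ι R) := by
    rintro _ ⟨m, -, rfl⟩
    exact ⟨π • m, hπM m, map_smul _ _ _⟩
  exact Submodule.pow_smul_mem_pow_of_commute (ExteriorAlgebra.commute_map_ι _ _) hπ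
    (ExteriorAlgebra.map_ι_span_range_pow_eq_bot w) hx'

/-- Let `R` be a DVR with uniformizer `π`, `M` a free `R`-module of finite
rank, and `N ⊆ M` a submodule with `π·M ⊆ N` such that `M/N` has length `f`.  Then for every
`d` and every `x ∈ ⋀^d M`, the element `π^{min(d,f)}·x` lies in the image of the canonical
map `⋀^d N → ⋀^d M` (which, inside the exterior algebra, is the submodule `(ι N)^d`). -/
theorem pow_uniformizer_smul_mem_exteriorPower_image
    {R : Type*} [CommRing R] [IsDomain R] [IsDiscreteValuationRing R]
    (π : R) (hπ : Irreducible π)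
    {M : Type*} [AddCommGroup M] [Module R M] [Module.Free R M] [Module.Finite R M]
    (N : Submodule R M) (hπM : ∀ x : M, π • x ∈ N)
    (f : ℕ) (hlen : ModuleLengthEq R (M ⧸ N) f)
    (d : ℕ) (x : ExteriorAlgebra R M) (hx : x ∈ ⋀[R]^d M) :
    π ^ min d f • x ∈ (Submodule.map (ExteriorAlgebra.ι R) N) ^ d :=
  pow_uniformizer_smul_mem_exteriorPower_image_general π N hπM f hlen d x hx
end

section
/- Let p be a prime, L a finite field extension of ℚ_p, and O_L the integral closure of ℤ_p in L. Suppose π ∈ O_L and u ∈ O_L is a unit such that p = u·π^e for some integer e ≥ 1. Let R be a commutative ring in which p = 0, set A = R ⊗_{ℤ_p} O_L, and let M be a free A-module. Then for every integer 0 ≤ j ≤ e−1, multiplication by π^j induces an isomorphism of A-modules M/(π·M) ≅ (π^j·M)/(π^{j+1}·M). -/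
/-!
As `p = u π^e` with `j < e`, the `ℤ_p`-modules `O_L/π` and `O_L/π^(j+1)` are killed by `p`, so they
are `𝔽_p`-vector spaces and the injection `O_L/π → O_L/π^(j+1)`, `x ↦ π^j x`, splits. Hence it stays
injective after `R ⊗_{ℤ_p} -`, and by right exactness of the tensor product this says that in
`A = R ⊗_{ℤ_p} O_L`, `π^(j+1) ∣ π^j z` forces `π ∣ z`. In a free `A`-module the same holds
coordinatewise, which is the kernel computation; the range statement is formal.
-/

open TensorProduct

theorem Module.IsTorsionBySet.exists_leftInverse_of_injective {S V W : Type*} [CommRing S]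
    {I : Ideal S} [I.IsMaximal] [AddCommGroup V] [AddCommGroup W] [Module S V] [Module S W]
    (hV : Module.IsTorsionBySet S V I) (hW : Module.IsTorsionBySet S W I)
    (f : V →ₗ[S] W) (hf : Function.Injective f) :
    ∃ g : W →ₗ[S] V, g ∘ₗ f = LinearMap.id := by
  let := Ideal.Quotient.field I
  let := hV.module
  let := hW.module
  let f' : V →ₗ[S ⧸ I] W :=
    { toFun := f
      map_add' := f.map_add
      map_smul' := by
        rintro ⟨a⟩ x
        exact f.map_smul a x }
  obtain ⟨g, hg⟩ := f'.exists_leftInverse_of_injective (LinearMap.ker_eq_bot.mpr hf)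
  have := hV.isScalarTower (S := S)
  have := hW.isScalarTower (S := S)
  exact ⟨g.restrictScalars S, LinearMap.ext fun v => LinearMap.congr_fun hg v⟩

theorem LinearMap.lTensor_injective_of_comp_eq_id {S M N P : Type*} [CommRing S]
    [AddCommGroup M] [AddCommGroup N] [AddCommGroup P] [Module S M] [Module S N] [Module S P]
    {f : M →ₗ[S] N} {g : N →ₗ[S] M} (hgf : g ∘ₗ f = LinearMap.id) :
    Function.Injective (f.lTensor P) :=
  Function.LeftInverse.injective (g := g.lTensor P) fun x => by
    rw [← LinearMap.comp_apply, ← LinearMap.lTensor_comp, hgf, LinearMap.lTensor_id,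
      LinearMap.id_apply]

theorem Ideal.Quotient.isTorsionBySet_of_map_le {S C : Type*} [CommRing S] [CommRing C]
    [Algebra S C] {I : Ideal S} {J : Ideal C} (hIJ : I.map (algebraMap S C) ≤ J) :
    Module.IsTorsionBySet S (C ⧸ J) I := by
  intro x a
  obtain ⟨x, rfl⟩ := Ideal.Quotient.mk_surjective x
  rw [Algebra.smul_def, IsScalarTower.algebraMap_apply S C, Ideal.Quotient.algebraMap_eq,
    ← map_mul, Ideal.Quotient.eq_zero_iff_mem]
  exact J.mul_mem_right _ (hIJ (Ideal.mem_map_of_mem _ a.2))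

theorem Algebra.TensorProduct.lTensor_mulLeft {S R C : Type*} [CommRing S] [CommRing R]
    [CommRing C] [Algebra S R] [Algebra S C] (c : C) :
    (LinearMap.mulLeft S c).lTensor R = LinearMap.mulLeft S ((1 : R) ⊗ₜ[S] c) := by
  ext r x
  simp

theorem Algebra.TensorProduct.ker_map_id_mkₐ_span_singleton {S R C : Type*} [CommRing S]
    [CommRing R] [CommRing C] [Algebra S R] [Algebra S C] (c : C) :
    RingHom.ker (map (AlgHom.id S R) (Ideal.Quotient.mkₐ S (Ideal.span {c}))) =
      Ideal.span {(1 : R) ⊗ₜ[S] c} := by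
  rw [lTensor_ker _ (Ideal.Quotient.mkₐ_surjective S _), ← RingHom.ker_coe_toRingHom,
    Ideal.Quotient.mkₐ_ker, Ideal.map_span, Set.image_singleton, includeRight_apply]

theorem Algebra.TensorProduct.one_tmul_dvd_of_pow_succ_dvd_pow_mul {S R C : Type*} [CommRing S]
    [CommRing R] [CommRing C] [IsDomain C] [Algebra S R] [Algebra S C] {I : Ideal S} [I.IsMaximal]
    {π : C} (hπ : π ≠ 0) {j : ℕ} (hI : I.map (algebraMap S C) ≤ Ideal.span {π ^ (j + 1)})
    {z : R ⊗[S] C} (hz : ((1 : R) ⊗ₜ[S] π) ^ (j + 1) ∣ ((1 : R) ⊗ₜ[S] π) ^ j * z) :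
    (1 : R) ⊗ₜ[S] π ∣ z := by
  let q (c : C) := map (AlgHom.id S R) (Ideal.Quotient.mkₐ S (Ideal.span {c}))
  have one_tmul_dvd_iff (c : C) (x : R ⊗[S] C) : (1 : R) ⊗ₜ[S] c ∣ x ↔ q c x = 0 := by
    rw [← RingHom.mem_ker, ker_map_id_mkₐ_span_singleton, Ideal.mem_span_singleton]
  have hπ_le : Ideal.span {π} ≤
      Submodule.comap (LinearMap.mulLeft C (π ^ j)) (Ideal.span {π ^ (j + 1)}) := by
    rw [Ideal.span_le, Set.singleton_subset_iff]
    exact Ideal.mem_span_singleton.mpr (pow_succ π j).dvd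
  let ψ : C ⧸ Ideal.span {π} →ₗ[S] C ⧸ Ideal.span {π ^ (j + 1)} :=
    ((Ideal.span {π}).mapQ _ (LinearMap.mulLeft C (π ^ j)) hπ_le).restrictScalars S
  have hψ : Function.Injective ψ := by
    rw [← LinearMap.ker_eq_bot, eq_bot_iff]
    intro x hx
    obtain ⟨x, rfl⟩ := Ideal.Quotient.mk_surjective x
    have hx : π ^ j * π ∣ π ^ j * x := by
      rw [← pow_succ, ← Ideal.mem_span_singleton, ← Ideal.Quotient.eq_zero_iff_mem]
      exact hx
    rw [Submodule.mem_bot, Ideal.Quotient.eq_zero_iff_mem, Ideal.mem_span_singleton]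
    exact (mul_dvd_mul_iff_left (pow_ne_zero j hπ)).mp hx
  have hψ_mk : ψ ∘ₗ (Ideal.Quotient.mkₐ S (Ideal.span {π})).toLinearMap =
      (Ideal.Quotient.mkₐ S (Ideal.span {π ^ (j + 1)})).toLinearMap ∘ₗ
        LinearMap.mulLeft S (π ^ j) :=
    rfl
  obtain ⟨g, hg⟩ := Module.IsTorsionBySet.exists_leftInverse_of_injective
    (Ideal.Quotient.isTorsionBySet_of_map_le (hI.trans (Ideal.span_singleton_le_span_singleton.mpr
      (dvd_pow_self π j.succ_ne_zero))))
    (Ideal.Quotient.isTorsionBySet_of_map_le hI) ψ hψ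
  rw [one_tmul_dvd_iff]
  apply LinearMap.lTensor_injective_of_comp_eq_id (P := R) hg
  have hcomm : ψ.lTensor R (q π z) = q (π ^ (j + 1)) ((1 : R) ⊗ₜ[S] (π ^ j) * z) := by
    have := LinearMap.congr_fun (congrArg (LinearMap.lTensor R) hψ_mk) z
    rwa [LinearMap.lTensor_comp, LinearMap.lTensor_comp, LinearMap.comp_apply,
      LinearMap.comp_apply, lTensor_mulLeft, LinearMap.mulLeft_apply] at this
  rw [map_zero, hcomm, ← one_tmul_dvd_iff]
  simpa only [tmul_pow, one_pow] using hz

theorem Module.Free.exists_smul_eq_of_forall_dvd {A M : Type*} [CommSemiring A] [AddCommMonoid M]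
    [Module A M] [Module.Free A M] {a b c : A} (h : ∀ z : A, b ∣ a * z → c ∣ z) {x y : M}
    (hxy : b • y = a • x) : ∃ w, c • w = x := by
  let B := Module.Free.chooseBasis A M
  have hcoord (i) : c ∣ B.repr x i :=
    h _ ⟨B.repr y i, by simpa using congrArg (B.repr · i) hxy.symm⟩
  choose w hw using hcoord
  refine ⟨(B.repr x).sum fun i _ => w i • B i, ?_⟩
  conv_rhs => rw [← B.linearCombination_repr x, Finsupp.linearCombination_apply]
  simp only [Finsupp.sum, Finset.smul_sum, smul_smul, ← hw]

theorem mul_pow_uniformizer_induces_iso_general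
    (p : ℕ) [Fact p.Prime]
    (L : Type*) [Field L] [Algebra ℚ_[p] L]
    [Algebra ℤ_[p] L]
    (π : ↥(integralClosure ℤ_[p] L)) (u : (↥(integralClosure ℤ_[p] L))ˣ)
    (e : ℕ) (he : 1 ≤ e)
    (hpu : ((p : ℕ) : ↥(integralClosure ℤ_[p] L)) = (u : ↥(integralClosure ℤ_[p] L)) * π ^ e)
    (R : Type*) [CommRing R] [Algebra ℤ_[p] R]
    (M : Type*) [AddCommGroup M]
    [Module (R ⊗[ℤ_[p]] ↥(integralClosure ℤ_[p] L)) M]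
    [Module.Free (R ⊗[ℤ_[p]] ↥(integralClosure ℤ_[p] L)) M]
    (j : ℕ) (hj : j ≤ e - 1) :
    LinearMap.ker
        ((Submodule.mkQ (LinearMap.range
            ((((1 : R) ⊗ₜ[ℤ_[p]] (π : ↥(integralClosure ℤ_[p] L))) ^ (j + 1)) •
              (LinearMap.id : M →ₗ[R ⊗[ℤ_[p]] ↥(integralClosure ℤ_[p] L)] M)))) ∘ₗ
          ((((1 : R) ⊗ₜ[ℤ_[p]] (π : ↥(integralClosure ℤ_[p] L))) ^ j) •
            (LinearMap.id : M →ₗ[R ⊗[ℤ_[p]] ↥(integralClosure ℤ_[p] L)] M)))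
      = LinearMap.range
          ((((1 : R) ⊗ₜ[ℤ_[p]] (π : ↥(integralClosure ℤ_[p] L)))) •
            (LinearMap.id : M →ₗ[R ⊗[ℤ_[p]] ↥(integralClosure ℤ_[p] L)] M)) ∧
    LinearMap.range
        ((Submodule.mkQ (LinearMap.range
            ((((1 : R) ⊗ₜ[ℤ_[p]] (π : ↥(integralClosure ℤ_[p] L))) ^ (j + 1)) •
              (LinearMap.id : M →ₗ[R ⊗[ℤ_[p]] ↥(integralClosure ℤ_[p] L)] M)))) ∘ₗ
          ((((1 : R) ⊗ₜ[ℤ_[p]] (π : ↥(integralClosure ℤ_[p] L))) ^ j) •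
            (LinearMap.id : M →ₗ[R ⊗[ℤ_[p]] ↥(integralClosure ℤ_[p] L)] M)))
      = Submodule.map
          (Submodule.mkQ (LinearMap.range
            ((((1 : R) ⊗ₜ[ℤ_[p]] (π : ↥(integralClosure ℤ_[p] L))) ^ (j + 1)) •
              (LinearMap.id : M →ₗ[R ⊗[ℤ_[p]] ↥(integralClosure ℤ_[p] L)] M))))
          (LinearMap.range
            ((((1 : R) ⊗ₜ[ℤ_[p]] (π : ↥(integralClosure ℤ_[p] L))) ^ j) •
              (LinearMap.id : M →ₗ[R ⊗[ℤ_[p]] ↥(integralClosure ℤ_[p] L)] M))) := by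
  have hp : ((p : ℕ) : integralClosure ℤ_[p] L) ≠ 0 := by
    have := charZero_of_injective_algebraMap (algebraMap ℚ_[p] L).injective
    exact fun h => (Nat.cast_ne_zero.mpr (Fact.out : p.Prime).ne_zero)
      (congrArg Subtype.val h : ((p : ℕ) : L) = 0)
  have hπ : π ≠ 0 := by
    rintro rfl
    exact hp (by rw [hpu, zero_pow (by omega), mul_zero])
  have hI : (IsLocalRing.maximalIdeal ℤ_[p]).map (algebraMap ℤ_[p] (integralClosure ℤ_[p] L)) ≤
      Ideal.span {π ^ (j + 1)} := by
    rw [PadicInt.maximalIdeal_eq_span_p, Ideal.map_span, Set.image_singleton, map_natCast,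
      Ideal.span_singleton_le_span_singleton, hpu]
    exact (pow_dvd_pow π (by omega)).mul_left _
  refine ⟨?_, LinearMap.range_comp _ _⟩
  ext x
  simp only [LinearMap.mem_ker, LinearMap.comp_apply, LinearMap.smul_apply, LinearMap.id_apply,
    Submodule.mkQ_apply, Submodule.Quotient.mk_eq_zero, LinearMap.mem_range]
  constructor
  · rintro ⟨y, hy⟩
    exact Module.Free.exists_smul_eq_of_forall_dvd
      (fun z => Algebra.TensorProduct.one_tmul_dvd_of_pow_succ_dvd_pow_mul hπ hI) hy
  · rintro ⟨w, rfl⟩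
    exact ⟨w, by rw [smul_smul, ← pow_succ]⟩

/-- Let `p` be a prime, `L` a finite extension of `ℚ_p`, `O_L` the integral
closure of `ℤ_p` in `L`, `π ∈ O_L` and `u ∈ O_Lˣ` with `p = u·π^e`, `e ≥ 1`.  Let `R` be a
commutative ring in which `p = 0` (viewed as a `ℤ_p`-algebra), `A = R ⊗_{ℤ_p} O_L`, and `M`
a free `A`-module.  Then for `0 ≤ j ≤ e - 1`, multiplication by `π^j` induces an
isomorphism `M/(π·M) ≅ (π^j·M)/(π^{j+1}·M)`: the composite
`M → M ⧸ π^{j+1}M`, `x ↦ π^j·x mod π^{j+1}M`, has kernel `π·M` and range the image of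
`π^j·M` in `M ⧸ π^{j+1}M`. -/
theorem mul_pow_uniformizer_induces_iso
    (p : ℕ) [Fact p.Prime]
    (L : Type*) [Field L] [Algebra ℚ_[p] L] [FiniteDimensional ℚ_[p] L]
    [Algebra ℤ_[p] L] [IsScalarTower ℤ_[p] ℚ_[p] L]
    (π : ↥(integralClosure ℤ_[p] L)) (u : (↥(integralClosure ℤ_[p] L))ˣ)
    (e : ℕ) (he : 1 ≤ e)
    (hpu : ((p : ℕ) : ↥(integralClosure ℤ_[p] L)) = (u : ↥(integralClosure ℤ_[p] L)) * π ^ e)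
    (R : Type*) [CommRing R] [Algebra ℤ_[p] R] (hpR : ((p : ℕ) : R) = 0)
    (M : Type*) [AddCommGroup M]
    [Module (R ⊗[ℤ_[p]] ↥(integralClosure ℤ_[p] L)) M]
    [Module.Free (R ⊗[ℤ_[p]] ↥(integralClosure ℤ_[p] L)) M]
    (j : ℕ) (hj : j ≤ e - 1) :
    LinearMap.ker
        ((Submodule.mkQ (LinearMap.range
            ((((1 : R) ⊗ₜ[ℤ_[p]] (π : ↥(integralClosure ℤ_[p] L))) ^ (j + 1)) •
              (LinearMap.id : M →ₗ[R ⊗[ℤ_[p]] ↥(integralClosure ℤ_[p] L)] M)))) ∘ₗ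
          ((((1 : R) ⊗ₜ[ℤ_[p]] (π : ↥(integralClosure ℤ_[p] L))) ^ j) •
            (LinearMap.id : M →ₗ[R ⊗[ℤ_[p]] ↥(integralClosure ℤ_[p] L)] M)))
      = LinearMap.range
          ((((1 : R) ⊗ₜ[ℤ_[p]] (π : ↥(integralClosure ℤ_[p] L)))) •
            (LinearMap.id : M →ₗ[R ⊗[ℤ_[p]] ↥(integralClosure ℤ_[p] L)] M)) ∧
    LinearMap.range
        ((Submodule.mkQ (LinearMap.range
            ((((1 : R) ⊗ₜ[ℤ_[p]] (π : ↥(integralClosure ℤ_[p] L))) ^ (j + 1)) •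
              (LinearMap.id : M →ₗ[R ⊗[ℤ_[p]] ↥(integralClosure ℤ_[p] L)] M)))) ∘ₗ
          ((((1 : R) ⊗ₜ[ℤ_[p]] (π : ↥(integralClosure ℤ_[p] L))) ^ j) •
            (LinearMap.id : M →ₗ[R ⊗[ℤ_[p]] ↥(integralClosure ℤ_[p] L)] M)))
      = Submodule.map
          (Submodule.mkQ (LinearMap.range
            ((((1 : R) ⊗ₜ[ℤ_[p]] (π : ↥(integralClosure ℤ_[p] L))) ^ (j + 1)) •
              (LinearMap.id : M →ₗ[R ⊗[ℤ_[p]] ↥(integralClosure ℤ_[p] L)] M))))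
          (LinearMap.range
            ((((1 : R) ⊗ₜ[ℤ_[p]] (π : ↥(integralClosure ℤ_[p] L))) ^ j) •
              (LinearMap.id : M →ₗ[R ⊗[ℤ_[p]] ↥(integralClosure ℤ_[p] L)] M))) :=
  mul_pow_uniformizer_induces_iso_general p L π u e he hpu R M j hj
end

section
/- Let R be a discrete valuation ring with uniformizer π, let M be a free R-module of finite rank, let e ≥ 1 be an integer, and let Fil⁰ ⊆ Fil¹ ⊆ ⋯ ⊆ Fil^e ⊆ M be a chain of submodules such that Fil⁰ ⊆ π^e·M, π·Fil^i ⊆ Fil^{i−1} for 1 ≤ i ≤ e, and the R-module Fil^i/Fil^{i−1} has length d_i for 1 ≤ i ≤ e. Then for every integer d ≥ 1 and every 0 ≤ i ≤ e, the image of the canonical map ⋀^d Fil^i → ⋀^d M is contained in π^{e·d − ∑_{j=1}^{i} min(d, d_j)} · ⋀^d M. -/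
/-!
Induction on `i`, the case `i = 0` being `Fil⁰ ⊆ πᵉ M`. For the step, the length hypothesis
writes `Fil^{i+1} = Fil^i + R g₁ + ⋯ + R gₘ` with `m = d_{i+1}`, and `π gₜ ∈ Fil^i`. Then
`π^{min(d, m)} ⋀^d Fil^{i+1} ⊆ ⋀^d Fil^i`: the exponent `d` because `π Fil^{i+1} ⊆ Fil^i`, the
exponent `m` by adjoining the `gₜ` one at a time, since `ι x * ι x = 0` and vectors anticommute
in the exterior algebra, so a wedge of vectors of `N + R x` is a sum of wedges with at most one
factor `x`. As `⋀^d M` is free, hence `π`-torsion-free, the divisibility known for `Fil^i`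
passes to `Fil^{i+1}` with the exponent lowered by `min(d, m)`.
-/

open Pointwise

namespace Submodule

section Algebra

variable {R A : Type*} [CommSemiring R] [Semiring A] [Algebra R A]

theorem smul_pow_le_pow_of_smul_le {c : R} {P Q : Submodule R A} (h : c • P ≤ Q) (n : ℕ) :
    c ^ n • P ^ n ≤ Q ^ n :=
  smul_pow c P n ▸ pow_le_pow_left' h n

theorem sup_pow_succ_le {P Q : Submodule R A} (hPQ : P * Q ≤ Q * P) (hQQ : Q * Q = ⊥)
    (n : ℕ) : (P ⊔ Q) ^ (n + 1) ≤ P ^ (n + 1) ⊔ Q * P ^ n := by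
  induction n with
  | zero => simp
  | succ n ih =>
    calc (P ⊔ Q) ^ (n + 2) = (P ⊔ Q) * (P ⊔ Q) ^ (n + 1) := pow_succ' _ _
      _ ≤ (P ⊔ Q) * (P ^ (n + 1) ⊔ Q * P ^ n) := mul_le_mul_right ih _
      _ = P ^ (n + 2) ⊔ Q * P ^ (n + 1) ⊔ P * Q * P ^ n ⊔ Q * Q * P ^ n := by
        simp only [sup_mul, mul_sup, mul_assoc, pow_succ' P (n + 1), sup_assoc]
      _ ≤ P ^ (n + 2) ⊔ Q * P ^ (n + 1) := by
        rw [hQQ, bot_mul, sup_bot_eq, pow_succ' P n, ← mul_assoc Q P]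
        exact sup_le le_rfl (le_sup_of_le_right (mul_le_mul_left hPQ _))

theorem smul_sup_pow_le {c : R} {P Q : Submodule R A} (hc : c • Q ≤ P) (hPQ : P * Q ≤ Q * P)
    (hQQ : Q * Q = ⊥) : ∀ n : ℕ, c • (P ⊔ Q) ^ n ≤ P ^ n
  | 0 => by simp [smul_le_self_of_tower]
  | n + 1 =>
    calc c • (P ⊔ Q) ^ (n + 1) ≤ c • (P ^ (n + 1) ⊔ Q * P ^ n) :=
          smul_mono_right c (sup_pow_succ_le hPQ hQQ n)
      _ = c • P ^ (n + 1) ⊔ (c • Q) * P ^ n := by rw [smul_sup', smul_mul_assoc]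
      _ ≤ P ^ (n + 1) := sup_le (smul_le_self_of_tower c _)
          ((mul_le_mul_left hc _).trans (pow_succ' P n).ge)

end Algebra

theorem le_of_smul_le_smul {R V : Type*} [CommSemiring R] [IsCancelMulZero R]
    [AddCommMonoid V] [Module R V] {W P Q : Submodule R V} [Module.IsTorsionFree R W] {c : R}
    (hc : c ≠ 0) (hP : P ≤ W) (hQ : Q ≤ W) (h : c • P ≤ c • Q) : P ≤ Q := by
  intro x hx
  obtain ⟨y, hy, hyx⟩ :=
    (mem_smul_pointwise_iff_exists _ _ _).1 (h (smul_mem_pointwise_smul x c P hx))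
  have hyx' : c • (⟨y, hQ hy⟩ : W) = c • ⟨x, hP hx⟩ := Subtype.ext hyx
  have hxy : y = x := congrArg Subtype.val (smul_right_injective W hc hyx')
  exact hxy ▸ hy

variable {R M : Type*} [Ring R] [AddCommGroup M] [Module R M]

theorem exists_le_sup_span_singleton_of_covBy {N N' : Submodule R M} (h : N ⋖ N') :
    ∃ x, N' ≤ N ⊔ R ∙ x := by
  obtain ⟨x, hxN', hxN⟩ := SetLike.exists_of_lt h.lt
  refine ⟨x, ((h.eq_or_eq le_sup_left (sup_le h.le ?_)).resolve_left fun heq => ?_).ge⟩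
  · exact (span_singleton_le_iff_mem x N').2 hxN'
  · exact hxN (heq ▸ mem_sup_right (mem_span_singleton_self x))

theorem exists_last_le_head_sup_span (s : CompositionSeries (Submodule R M)) :
    ∃ f : Fin s.length → M, s.last ≤ s.head ⊔ span R (Set.range f) := by
  induction s using RelSeries.inductionOn' with
  | singleton N => exact ⟨Fin.elim0, le_sup_left⟩
  | snoc s N hN ih =>
    obtain ⟨f, hf⟩ := ih
    obtain ⟨x, hx⟩ := exists_le_sup_span_singleton_of_covBy hN
    rw [RelSeries.last_snoc, RelSeries.head_snoc]
    -- `(s.snoc N hN).length` is `s.length + 1` only up to unfolding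
    show ∃ f : Fin (s.length + 1) → M, N ≤ s.head ⊔ span R (Set.range f)
    refine ⟨Fin.snoc f x, ?_⟩
    rw [Fin.range_snoc, span_insert]
    calc N ≤ s.last ⊔ R ∙ x := hx
      _ ≤ s.head ⊔ (R ∙ x ⊔ span R (Set.range f)) := by
        rw [sup_comm (R ∙ x), ← sup_assoc]
        exact sup_le_sup_right hf _

end Submodule

namespace ModuleLengthEq

open Submodule

variable {R M : Type*} [Ring R] [AddCommGroup M] [Module R M]

theorem exists_span_range_eq_top {n : ℕ} (h : ModuleLengthEq R M n) :
    ∃ f : Fin n → M, span R (Set.range f) = ⊤ := by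
  obtain ⟨s, hhead, hlast, rfl⟩ := h
  obtain ⟨f, hf⟩ := exists_last_le_head_sup_span s
  rw [hhead, hlast, bot_sup_eq, top_le_iff] at hf
  exact ⟨f, hf⟩

theorem exists_le_sup_span {N N' : Submodule R M} {n : ℕ}
    (h : ModuleLengthEq R (N ⧸ N'.comap N.subtype) n) :
    ∃ g : Fin n → M, (∀ t, g t ∈ N) ∧ N ≤ N' ⊔ span R (Set.range g) := by
  obtain ⟨f, hf⟩ := h.exists_span_range_eq_top
  choose y hy using fun t => Submodule.Quotient.mk_surjective _ (f t)
  have hy_top : N'.comap N.subtype ⊔ span R (Set.range y) = ⊤ := by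
    have hmk : (N'.comap N.subtype).mkQ ∘ y = f := funext hy
    rw [← comap_map_mkQ, map_span, ← Set.range_comp, hmk, hf, comap_top]
  refine ⟨fun t => y t, fun t => (y t).2, ?_⟩
  calc N = map N.subtype (N'.comap N.subtype ⊔ span R (Set.range y)) := by
        rw [hy_top, map_subtype_top]
    _ ≤ N' ⊔ span R (Set.range fun t => (y t : M)) := by
        rw [Submodule.map_sup, map_span, ← Set.range_comp]
        exact sup_le_sup_right (map_comap_le _ _) _

end ModuleLengthEq

namespace ExteriorAlgebra

open Submodule

variable {R M : Type*} [CommRing R] [AddCommGroup M] [Module R M]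

theorem map_ι_mul_map_ι_le_s11 (N N' : Submodule R M) :
    N.map (ι R) * N'.map (ι R) ≤ N'.map (ι R) * N.map (ι R) := by
  refine mul_le.2 ?_
  rintro _ ⟨x, hx, rfl⟩ _ ⟨y, hy, rfl⟩
  rw [← neg_eq_of_add_eq_zero_left (ι_add_mul_swap x y)]
  exact neg_mem (mul_mem_mul (mem_map_of_mem hy) (mem_map_of_mem hx))

theorem map_ι_span_singleton_mul_self (x : M) :
    (R ∙ x).map (ι R) * (R ∙ x).map (ι R) = ⊥ := by
  rw [Submodule.map_span, Set.image_singleton, span_mul_span, Set.singleton_mul_singleton,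
    ι_sq_zero, span_singleton_eq_bot.2 rfl]

theorem smul_map_ι_le_of_smul_le {c : R} {N N' : Submodule R M} (h : c • N ≤ N') :
    c • N.map (ι R) ≤ N'.map (ι R) :=
  map_pointwise_smul c N (ι R) ▸ Submodule.map_mono h

theorem smul_pow_map_ι_le_of_le_sup_span_singleton {c : R} {N N' : Submodule R M} {x : M}
    (hN : N ≤ N' ⊔ R ∙ x) (hx : c • x ∈ N') (n : ℕ) :
    c • N.map (ι R) ^ n ≤ N'.map (ι R) ^ n := by
  have hcx : c • (R ∙ x) ≤ N' := by
    rw [smul_span, Set.smul_set_singleton, span_singleton_le_iff_mem]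
    exact hx
  calc c • N.map (ι R) ^ n ≤ c • (N'.map (ι R) ⊔ (R ∙ x).map (ι R)) ^ n :=
        smul_mono_right c
          (pow_le_pow_left' ((Submodule.map_mono hN).trans (Submodule.map_sup ..).le) n)
    _ ≤ N'.map (ι R) ^ n := smul_sup_pow_le (smul_map_ι_le_of_smul_le hcx)
        (map_ι_mul_map_ι_le_s11 _ _) (map_ι_span_singleton_mul_self x) n

theorem smul_pow_map_ι_le_of_le_sup_span {c : R} {m : ℕ} {g : Fin m → M} {N N' : Submodule R M}
    (hN : N ≤ N' ⊔ span R (Set.range g)) (hg : ∀ t, c • g t ∈ N') (n : ℕ) :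
    c ^ m • N.map (ι R) ^ n ≤ N'.map (ι R) ^ n := by
  induction m generalizing N with
  | zero =>
    rw [Set.range_eq_empty, span_empty, sup_bot_eq] at hN
    simpa using pow_le_pow_left' (Submodule.map_mono hN) n
  | succ m ih =>
    set N'' := N' ⊔ span R (Set.range (Fin.tail g))
    have hN'' : N ≤ N'' ⊔ R ∙ g 0 := by
      rw [← Fin.cons_self_tail g, Fin.range_cons, span_insert] at hN
      exact hN.trans_eq (by simp only [N'']; ac_rfl)
    calc c ^ (m + 1) • N.map (ι R) ^ n = c ^ m • c • N.map (ι R) ^ n := by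
          rw [pow_succ, mul_smul]
      _ ≤ c ^ m • N''.map (ι R) ^ n := smul_mono_right _
          (smul_pow_map_ι_le_of_le_sup_span_singleton hN'' (mem_sup_left (hg 0)) n)
      _ ≤ N'.map (ι R) ^ n := ih le_rfl fun t => hg t.succ

theorem smul_pow_map_ι_le_of_smul_le {c : R} {N N' : Submodule R M} (h : c • N ≤ N') (n : ℕ) :
    c ^ n • N.map (ι R) ^ n ≤ N'.map (ι R) ^ n :=
  smul_pow_le_pow_of_smul_le (smul_map_ι_le_of_smul_le h) n

theorem smul_pow_min_map_ι_le {c : R} {m : ℕ} {g : Fin m → M} {N N' : Submodule R M}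
    (hN : N ≤ N' ⊔ span R (Set.range g)) (hg : ∀ t, c • g t ∈ N') (n : ℕ) :
    c ^ min n m • N.map (ι R) ^ n ≤ N'.map (ι R) ^ n := by
  rcases min_cases n m with ⟨h, -⟩ | ⟨h, -⟩ <;> rw [h]
  · have hcN : c • N ≤ N' :=
      calc c • N ≤ c • (N' ⊔ span R (Set.range g)) := smul_mono_right c hN
        _ = c • N' ⊔ span R (c • Set.range g) := by rw [smul_sup', smul_span]
        _ ≤ N' := sup_le (smul_le_self_of_tower c N')
            (span_le.2 (by rintro _ ⟨_, ⟨t, rfl⟩, rfl⟩; exact hg t))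
    exact smul_pow_map_ι_le_of_smul_le hcN n
  · exact smul_pow_map_ι_le_of_le_sup_span hN hg n

theorem map_ι_pow_le_smul_exteriorPower {c : R} {N : Submodule R M} (h : N ≤ c • ⊤) (n : ℕ) :
    N.map (ι R) ^ n ≤ c ^ n • ⋀[R]^n M :=
  calc N.map (ι R) ^ n ≤ (c • (⊤ : Submodule R M).map (ι R)) ^ n :=
        pow_le_pow_left' (map_pointwise_smul c (⊤ : Submodule R M) (ι R) ▸ map_mono h) n
    _ = c ^ n • ⋀[R]^n M := by rw [smul_pow, Submodule.map_top]

end ExteriorAlgebra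

theorem exteriorPower_filtration_divisibility_general
    {R : Type*} [CommRing R] [IsDomain R]
    (π : R) (hπ : Irreducible π)
    {M : Type*} [AddCommGroup M] [Module R M] [Module.Free R M]
    (e : ℕ) (d : ℕ → ℕ) (Fil : ℕ → Submodule R M)
    (hFil0 : Fil 0 ≤ π ^ e • (⊤ : Submodule R M))
    (hsm : ∀ i, 1 ≤ i → i ≤ e → π • Fil i ≤ Fil (i - 1))
    (hlen : ∀ i, 1 ≤ i → i ≤ e →
      ModuleLengthEq R (↥(Fil i) ⧸ (Fil (i - 1)).comap (Fil i).subtype) (d i))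
    (dd : ℕ) (i : ℕ) (hi : i ≤ e) :
    (Submodule.map (ExteriorAlgebra.ι R) (Fil i)) ^ dd ≤
      π ^ (e * dd - ∑ j ∈ Finset.Icc 1 i, min dd (d j)) •
        (⋀[R]^dd M : Submodule R (ExteriorAlgebra R M)) := by
  induction i with
  | zero => simpa [pow_mul] using ExteriorAlgebra.map_ι_pow_le_smul_exteriorPower hFil0 dd
  | succ i ih =>
    obtain ⟨g, hgFil, hFil⟩ := (hlen (i + 1) (by omega) hi).exists_le_sup_span
    have hπg (t) : π • g t ∈ Fil i :=
      hsm (i + 1) (by omega) hi (Submodule.smul_mem_pointwise_smul _ _ _ (hgFil t))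
    have hsum := Finset.sum_Icc_succ_top (by omega : 1 ≤ i + 1) fun j => min dd (d j)
    have hbound : ∑ j ∈ Finset.Icc 1 (i + 1), min dd (d j) ≤ e * dd :=
      calc _ ≤ (Finset.Icc 1 (i + 1)).card • dd :=
            Finset.sum_le_card_nsmul _ _ _ fun j _ => min_le_left _ _
        _ ≤ e * dd := by simpa using Nat.mul_le_mul_right dd hi
    have hexp : e * dd - ∑ j ∈ Finset.Icc 1 i, min dd (d j) =
        min dd (d (i + 1)) + (e * dd - ∑ j ∈ Finset.Icc 1 (i + 1), min dd (d j)) := by omega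
    refine Submodule.le_of_smul_le_smul (pow_ne_zero (min dd (d (i + 1))) hπ.ne_zero)
      (pow_le_pow_left' LinearMap.map_le_range dd) (Submodule.smul_le_self_of_tower _ _) ?_
    calc π ^ min dd (d (i + 1)) • (Fil (i + 1)).map (ExteriorAlgebra.ι R) ^ dd
        ≤ (Fil i).map (ExteriorAlgebra.ι R) ^ dd :=
          ExteriorAlgebra.smul_pow_min_map_ι_le hFil hπg dd
      _ ≤ π ^ (e * dd - ∑ j ∈ Finset.Icc 1 i, min dd (d j)) • ⋀[R]^dd M := ih (by omega)
      _ = _ := by rw [hexp, pow_add, mul_smul]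

/-- Let `R` be a DVR with uniformizer `π`, `M` a free `R`-module of finite
rank, `e ≥ 1`, and `Fil⁰ ⊆ ⋯ ⊆ Fil^e ⊆ M` a chain of submodules with `Fil⁰ ⊆ π^e·M`,
`π·Fil^i ⊆ Fil^{i-1}`, and `Fil^i/Fil^{i-1}` of length `dᵢ` for `1 ≤ i ≤ e`.  Then for
every `d ≥ 1` and `0 ≤ i ≤ e`, the image of the canonical map `⋀^d Fil^i → ⋀^d M`
(the submodule `(ι Fil^i)^d` of the exterior algebra) is contained in
`π^{e·d - ∑_{j=1}^{i} min(d, dⱼ)} · ⋀^d M`. -/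
theorem exteriorPower_filtration_divisibility
    {R : Type*} [CommRing R] [IsDomain R] [IsDiscreteValuationRing R]
    (π : R) (hπ : Irreducible π)
    {M : Type*} [AddCommGroup M] [Module R M] [Module.Free R M] [Module.Finite R M]
    (e : ℕ) (he : 1 ≤ e) (d : ℕ → ℕ) (Fil : ℕ → Submodule R M)
    (hFil0 : Fil 0 ≤ π ^ e • (⊤ : Submodule R M))
    (hmono : ∀ i, 1 ≤ i → i ≤ e → Fil (i - 1) ≤ Fil i)
    (hsm : ∀ i, 1 ≤ i → i ≤ e → π • Fil i ≤ Fil (i - 1))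
    (hlen : ∀ i, 1 ≤ i → i ≤ e →
      ModuleLengthEq R (↥(Fil i) ⧸ (Fil (i - 1)).comap (Fil i).subtype) (d i))
    (dd : ℕ) (hdd : 1 ≤ dd) (i : ℕ) (hi : i ≤ e) :
    (Submodule.map (ExteriorAlgebra.ι R) (Fil i)) ^ dd ≤
      π ^ (e * dd - ∑ j ∈ Finset.Icc 1 i, min dd (d j)) •
        (⋀[R]^dd M : Submodule R (ExteriorAlgebra R M)) :=
  exteriorPower_filtration_divisibility_general π hπ e d Fil hFil0 hsm hlen dd i hi
end

section
/- Let R be a discrete valuation ring with uniformizer π, let M be a free R-module of finite rank, let e ≥ 1 be an integer, and let Fil⁰ ⊆ Fil¹ ⊆ ⋯ ⊆ Fil^e ⊆ M be a chain of submodules such that Fil⁰ ⊆ π^e·M, π·Fil^i ⊆ Fil^{i−1} for 1 ≤ i ≤ e, and the R-module Fil^i/Fil^{i−1} has length d_i for 1 ≤ i ≤ e. Then for every integer d ≥ 1, the image of the canonical map ⋀^d Fil^e → ⋀^d M is contained in π^{k_d} · ⋀^d M, where k_d = ∑_{j=1}^{e} max(d − d_j, 0). -/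
open Pointwise

/-! Since `π` kills `Fil^i / Fil^{i-1}`, this quotient is a `d_i`-dimensional vector space over
the residue field, so any family of more than `d_i` vectors of `Fil^i` has a relation modulo
`Fil^{i-1}` with a unit coefficient. In a wedge of `d` vectors of `Fil^i` one can therefore trade
vectors, one at a time and up to units, for vectors of `Fil^{i-1}` until only `min(d, d_i)` of them
are left, and these land in `Fil^{i-1}` after multiplication by `π`. Hence the images `A_i` of
`⋀^d Fil^i` satisfy `π^{min(d, d_i)} A_i ⊆ A_{i-1}`, and chaining down to `A_0 ⊆ π^{e d} ⋀^d M`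
gives `π^{Σ min(d, d_i)} A_e ⊆ π^{e d} ⋀^d M`. As `⋀ M` is free, the factor `π^{Σ min(d, d_i)}`
cancels, leaving `π^{e d - Σ min(d, d_i)} = π^{k_d}`. -/

theorem AlternatingMap.map_update_sum_smul {R M N ι : Type*} [Semiring R] [AddCommMonoid M]
    [Module R M] [AddCommMonoid N] [Module R N] [Fintype ι] [DecidableEq ι]
    (f : M [⋀^ι]→ₗ[R] N) (v : ι → M) (c : ι → R) (i : ι) :
    f (Function.update v i (∑ j, c j • v j)) = c i • f v := by
  rw [f.map_update_sum, Finset.sum_eq_single i]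
  · rw [f.map_update_smul, Function.update_eq_self]
  · intro j _ hji
    rw [f.map_update_smul, f.map_update_self _ hji.symm, smul_zero]
  · simp

theorem AlternatingMap.map_comp_perm_mem_iff {R M N ι : Type*} [Ring R] [AddCommMonoid M]
    [Module R M] [AddCommGroup N] [Module R N] [Fintype ι] [DecidableEq ι]
    (f : M [⋀^ι]→ₗ[R] N) (p : Submodule R N) (v : ι → M) (σ : Equiv.Perm ι) :
    f (v ∘ σ) ∈ p ↔ f v ∈ p := by
  rw [f.map_perm]
  rcases Int.units_eq_one_or (Equiv.Perm.sign σ) with h | h <;> simp [h]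

theorem Submodule.pointwise_smul_pow {R A : Type*} [CommSemiring R] [Semiring A] [Algebra R A]
    (a : R) (N : Submodule R A) (m : ℕ) : (a • N) ^ m = a ^ m • N ^ m := by
  induction m with
  | zero => simp
  | succ m ih =>
    rw [pow_succ, pow_succ, ih, ← Submodule.mul_smul_mul_eq_smul_mul_smul, ← pow_succ, ← pow_succ]

theorem Submodule.pointwise_smul_le_pointwise_smul_iff_of_isSMulRegular {R M : Type*}
    [CommSemiring R] [AddCommMonoid M] [Module R M] {a : R} (ha : IsSMulRegular M a) {N N' : Submodule R M} :
    a • N ≤ a • N' ↔ N ≤ N' :=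
  Submodule.map_le_map_iff_of_injective (f := DistribSMul.toLinearMap R M a) ha N N'

theorem pow_sum_smul_le_of_forall_pow_smul_le {α β : Type*} [Monoid α] [Preorder β] [MulAction α β]
    [CovariantClass α β HSMul.hSMul LE.le] (a : α) (N : ℕ → β) (k : ℕ → ℕ) (e : ℕ)
    (h : ∀ i ∈ Finset.Icc 1 e, a ^ k i • N i ≤ N (i - 1)) :
    a ^ (∑ i ∈ Finset.Icc 1 e, k i) • N e ≤ N 0 := by
  induction e with
  | zero => simp
  | succ e ih =>
    rw [Finset.sum_Icc_succ_top (by omega), pow_add, mul_smul]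
    calc a ^ (∑ i ∈ Finset.Icc 1 e, k i) • a ^ k (e + 1) • N (e + 1)
        ≤ a ^ (∑ i ∈ Finset.Icc 1 e, k i) • N e := smul_le_smul_left _ (h (e + 1) (by simp))
      _ ≤ N 0 := ih fun i hi => h i (Finset.Icc_subset_Icc_right (by omega) hi)

theorem IsLocalRing.exists_isUnit_sum_smul_eq_zero_of_length_lt_card {R P ι : Type*} [CommRing R]
    [IsLocalRing R] [AddCommGroup P] [Module R P] [Fintype ι]
    (htor : Module.IsTorsionBySet R P (IsLocalRing.maximalIdeal R)) {n : ℕ}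
    (hlen : Module.length R P = n) (hcard : n < Fintype.card ι) (q : ι → P) :
    ∃ c : ι → R, (∃ i, IsUnit (c i)) ∧ ∑ i, c i • q i = 0 := by
  let k := R ⧸ IsLocalRing.maximalIdeal R
  let : Field k := Ideal.Quotient.field _
  let : Module k P := htor.module
  have : IsScalarTower R k P := htor.isScalarTower
  have hlen_k : Module.length k P = n :=
    (Module.length_eq_of_surjective (S := R) Ideal.Quotient.mk_surjective).symm.trans hlen
  have hdep : ¬LinearIndependent k q := fun hq => by
    have := Module.length_le_of_injective _ hq.fintypeLinearCombination_injective
    rw [Module.length_eq_finrank, Module.finrank_fintype_fun_eq_card, hlen_k] at this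
    exact absurd (ENat.natCast_le_natCast.mp this) hcard.not_ge
  obtain ⟨g, hg, i, hi⟩ := Fintype.not_linearIndependent_iff.mp hdep
  choose c hc using fun j => Ideal.Quotient.mk_surjective (g j)
  refine ⟨c, ⟨i, ?_⟩, ?_⟩
  · by_contra h
    exact hi (by rw [← hc i, Ideal.Quotient.eq_zero_iff_mem]; exact h)
  · rw [← hg]
    refine Finset.sum_congr rfl fun j _ => ?_
    rw [← hc j, ← Ideal.Quotient.algebraMap_eq, algebraMap_smul]

theorem exists_isUnit_sum_smul_mem_of_length_lt {R M : Type*} [CommRing R] [IsDomain R]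
    [IsDiscreteValuationRing R] [AddCommGroup M] [Module R M] {π : R} (hπ : Irreducible π)
    {S T : Submodule R M} (hST : π • S ≤ T) {n : ℕ}
    (hlen : Module.length R (S ⧸ T.comap S.subtype) = n) {m : ℕ} (hm : n < m)
    (x : Fin m → M) (hx : ∀ i, x i ∈ S) :
    ∃ c : Fin m → R, (∃ i, IsUnit (c i)) ∧ ∑ i, c i • x i ∈ T := by
  have htor : Module.IsTorsionBySet R (S ⧸ T.comap S.subtype) (IsLocalRing.maximalIdeal R) := by
    rw [hπ.maximalIdeal_eq, Module.isTorsionBySet_span_singleton_iff]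
    refine fun z => Submodule.Quotient.induction_on _ z fun y => ?_
    rw [← Submodule.Quotient.mk_smul, Submodule.Quotient.mk_eq_zero]
    exact hST (Submodule.smul_mem_pointwise_smul _ _ _ y.2)
  obtain ⟨c, hc, hsum⟩ := IsLocalRing.exists_isUnit_sum_smul_eq_zero_of_length_lt_card htor hlen
    (by simpa using hm) fun i => Submodule.Quotient.mk ⟨x i, hx i⟩
  refine ⟨c, hc, ?_⟩
  simp_rw [← Submodule.Quotient.mk_smul, ← Submodule.mkQ_apply, ← map_sum, Submodule.mkQ_apply,
    Submodule.Quotient.mk_eq_zero, Submodule.mem_comap] at hsum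
  simpa using hsum

theorem ModuleLengthEq.length_eq {R P : Type*} [Ring R] [AddCommGroup P] [Module R P] {n : ℕ}
    (h : ModuleLengthEq R P n) : Module.length R P = n := by
  obtain ⟨s, hhead, hlast, rfl⟩ := h
  exact (Module.length_compositionSeries s hhead hlast).symm

namespace ExteriorAlgebra

variable {R M : Type*} [CommRing R] [AddCommGroup M] [Module R M]

instance instModuleFree [Module.Free R M] : Module.Free R (ExteriorAlgebra R M) := by
  classical
  let : LinearOrder (Module.Free.ChooseBasisIndex R M) := linearOrderOfSTO WellOrderingRel
  exact .of_basis (Module.Free.chooseBasis R M).ExteriorAlgebra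

theorem pow_map_ι_eq_span_ιMulti (S : Submodule R M) (m : ℕ) :
    S.map (ι R) ^ m = Submodule.span R (ιMulti R m '' {x | ∀ i, x i ∈ S}) := by
  rw [Submodule.pow_eq_span_pow_set]
  congr 1
  ext z
  simp only [Set.mem_pow, Set.mem_image, Set.mem_ofPred_eq, ιMulti_apply]
  constructor
  · rintro ⟨f, rfl⟩
    choose x hx hfx using fun i => Submodule.mem_map.mp (f i).2
    exact ⟨x, hx, by simp [hfx]⟩
  · rintro ⟨x, hx, rfl⟩
    exact ⟨fun i => ⟨ι R (x i), Submodule.mem_map_of_mem (hx i)⟩, rfl⟩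

theorem ιMulti_mem_pow_map_ι {S : Submodule R M} {m : ℕ} {x : Fin m → M} (hx : ∀ i, x i ∈ S) :
    ιMulti R m x ∈ S.map (ι R) ^ m := by
  rw [pow_map_ι_eq_span_ιMulti]
  exact Submodule.subset_span ⟨x, hx, rfl⟩

theorem pow_map_ι_le_of_le_smul_top {a : R} {S : Submodule R M} (h : S ≤ a • ⊤) (m : ℕ) :
    S.map (ι R) ^ m ≤ a ^ m • ⋀[R]^m M := by
  have : S.map (ι R) ≤ a • LinearMap.range (ι R) := by
    rw [← Submodule.map_top, ← Submodule.map_pointwise_smul]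
    exact Submodule.map_mono h
  calc S.map (ι R) ^ m ≤ (a • LinearMap.range (ι R)) ^ m := pow_le_pow_left' this m
    _ = a ^ m • ⋀[R]^m M := Submodule.pointwise_smul_pow _ _ _

variable {π : R} {S T : Submodule R M}

theorem pow_smul_ιMulti_mem (hST : π • S ≤ T) {m : ℕ} {x : Fin m → M} (hx : ∀ i, x i ∈ S) :
    π ^ m • ιMulti R m x ∈ T.map (ι R) ^ m := by
  have := (ιMulti R m).map_smul_univ (fun _ => π) x
  rw [Finset.prod_const, Finset.card_univ, Fintype.card_fin] at this
  rw [← this]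
  exact ιMulti_mem_pow_map_ι fun i => hST (Submodule.smul_mem_pointwise_smul _ _ _ (hx i))

theorem pow_smul_ιMulti_mem_of_le (hST : π • S ≤ T) {n : ℕ}
    (hrel : ∀ m, n < m → ∀ x : Fin m → M, (∀ i, x i ∈ S) →
      ∃ c : Fin m → R, (∃ i, IsUnit (c i)) ∧ ∑ i, c i • x i ∈ T)
    {m : ℕ} (hnm : n ≤ m) {x : Fin m → M} (hx : ∀ i, x i ∈ S) :
    π ^ n • ιMulti R m x ∈ T.map (ι R) ^ m := by
  induction m, hnm using Nat.le_induction with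
  | base => exact pow_smul_ιMulti_mem hST hx
  | succ m hnm ih =>
    obtain ⟨c, ⟨l, hl⟩, hy⟩ := hrel (m + 1) (by omega) x hx
    set v := Function.update x l (∑ i, c i • x i) ∘ Equiv.swap 0 l
    have hv0 : v 0 ∈ T := by simpa [v] using hy
    have hvS : ∀ j : Fin m, v j.succ ∈ S := fun j => by
      have : Equiv.swap 0 l j.succ ≠ l := fun h => Fin.succ_ne_zero j <| by
        rwa [Equiv.swap_apply_eq_iff, Equiv.swap_apply_right] at h
      simpa [v, Function.update_of_ne this] using hx _
    -- Putting `∑ i, c i • x i ∈ T` in slot `l` scales the wedge by the unit `c l`; the swap then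
    -- brings that slot to the front, at the cost of a sign.
    let N := (T.map (ι R) ^ (m + 1)).comap (DistribSMul.toLinearMap R _ (π ^ n))
    change ιMulti R (m + 1) x ∈ N
    rw [← N.smul_mem_iff_of_isUnit hl, ← AlternatingMap.map_update_sum_smul,
      ← AlternatingMap.map_comp_perm_mem_iff _ _ _ (Equiv.swap 0 l)]
    change π ^ n • ιMulti R (m + 1) v ∈ T.map (ι R) ^ (m + 1)
    rw [ιMulti_succ_apply, ← mul_smul_comm, pow_succ']
    exact Submodule.mul_mem_mul (Submodule.mem_map_of_mem hv0) (ih hvS)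

theorem pow_min_smul_pow_map_ι_le (hST : π • S ≤ T) {n : ℕ}
    (hrel : ∀ m, n < m → ∀ x : Fin m → M, (∀ i, x i ∈ S) →
      ∃ c : Fin m → R, (∃ i, IsUnit (c i)) ∧ ∑ i, c i • x i ∈ T) (m : ℕ) :
    π ^ min m n • S.map (ι R) ^ m ≤ T.map (ι R) ^ m := by
  rw [pow_map_ι_eq_span_ιMulti, Submodule.pointwise_smul_def, Submodule.map_le_iff_le_comap,
    Submodule.span_le]
  rintro _ ⟨x, hx, rfl⟩
  rcases le_total m n with h | h
  · rw [min_eq_left h]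
    exact pow_smul_ιMulti_mem hST hx
  · rw [min_eq_right h]
    exact pow_smul_ιMulti_mem_of_le hST hrel h hx

end ExteriorAlgebra

theorem exteriorPower_filtration_divisibility_top_general
    {R : Type*} [CommRing R] [IsDomain R] [IsDiscreteValuationRing R]
    (π : R) (hπ : Irreducible π)
    {M : Type*} [AddCommGroup M] [Module R M] [Module.Free R M]
    (e : ℕ) (d : ℕ → ℕ) (Fil : ℕ → Submodule R M)
    (hFil0 : Fil 0 ≤ π ^ e • (⊤ : Submodule R M))
    (hsm : ∀ i, 1 ≤ i → i ≤ e → π • Fil i ≤ Fil (i - 1))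
    (hlen : ∀ i, 1 ≤ i → i ≤ e →
      ModuleLengthEq R (↥(Fil i) ⧸ (Fil (i - 1)).comap (Fil i).subtype) (d i))
    (dd : ℕ) :
    (Submodule.map (ExteriorAlgebra.ι R) (Fil e)) ^ dd ≤
      π ^ (∑ j ∈ Finset.Icc 1 e, (dd - d j)) •
        (⋀[R]^dd M : Submodule R (ExteriorAlgebra R M)) := by
  set A : ℕ → Submodule R (ExteriorAlgebra R M) := fun i => (Fil i).map (ExteriorAlgebra.ι R) ^ dd
  have hstep : ∀ i ∈ Finset.Icc 1 e, π ^ min dd (d i) • A i ≤ A (i - 1) := fun i hi => by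
    obtain ⟨hi1, hie⟩ := Finset.mem_Icc.mp hi
    exact ExteriorAlgebra.pow_min_smul_pow_map_ι_le (hsm i hi1 hie)
      (fun _ hm => exists_isUnit_sum_smul_mem_of_length_lt hπ (hsm i hi1 hie)
        (hlen i hi1 hie).length_eq hm) dd
  have hA0 : A 0 ≤ π ^ (e * dd) • ⋀[R]^dd M := by
    simpa only [← pow_mul] using ExteriorAlgebra.pow_map_ι_le_of_le_smul_top hFil0 dd
  have hexp : ∑ j ∈ Finset.Icc 1 e, min dd (d j) + ∑ j ∈ Finset.Icc 1 e, (dd - d j) = e * dd := by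
    rw [← Finset.sum_add_distrib]
    simp [add_comm, Nat.sub_add_min_cancel]
  have hreg : IsSMulRegular (ExteriorAlgebra R M) (π ^ ∑ j ∈ Finset.Icc 1 e, min dd (d j)) :=
    (IsRegular.of_ne_zero (pow_ne_zero _ hπ.ne_zero)).isSMulRegular
  rw [← Submodule.pointwise_smul_le_pointwise_smul_iff_of_isSMulRegular hreg, smul_smul, ← pow_add,
    hexp]
  exact (pow_sum_smul_le_of_forall_pow_smul_le π A _ e hstep).trans hA0

/-- Let `R` be a DVR with uniformizer `π`, `M` a free `R`-module of finite
rank, `e ≥ 1`, and `Fil⁰ ⊆ ⋯ ⊆ Fil^e ⊆ M` a chain of submodules with `Fil⁰ ⊆ π^e·M`,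
`π·Fil^i ⊆ Fil^{i-1}`, and `Fil^i/Fil^{i-1}` of length `dᵢ` for `1 ≤ i ≤ e`.  Then for
every `d ≥ 1`, the image of the canonical map `⋀^d Fil^e → ⋀^d M` (the submodule
`(ι Fil^e)^d` of the exterior algebra) is contained in `π^{k_d} · ⋀^d M`, where
`k_d = ∑_{j=1}^{e} max(d - dⱼ, 0)` (the `max` with `0` being truncated subtraction). -/
theorem exteriorPower_filtration_divisibility_top
    {R : Type*} [CommRing R] [IsDomain R] [IsDiscreteValuationRing R]
    (π : R) (hπ : Irreducible π)
    {M : Type*} [AddCommGroup M] [Module R M] [Module.Free R M] [Module.Finite R M]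
    (e : ℕ) (he : 1 ≤ e) (d : ℕ → ℕ) (Fil : ℕ → Submodule R M)
    (hFil0 : Fil 0 ≤ π ^ e • (⊤ : Submodule R M))
    (hmono : ∀ i, 1 ≤ i → i ≤ e → Fil (i - 1) ≤ Fil i)
    (hsm : ∀ i, 1 ≤ i → i ≤ e → π • Fil i ≤ Fil (i - 1))
    (hlen : ∀ i, 1 ≤ i → i ≤ e →
      ModuleLengthEq R (↥(Fil i) ⧸ (Fil (i - 1)).comap (Fil i).subtype) (d i))
    (dd : ℕ) (hdd : 1 ≤ dd) :
    (Submodule.map (ExteriorAlgebra.ι R) (Fil e)) ^ dd ≤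
      π ^ (∑ j ∈ Finset.Icc 1 e, (dd - d j)) •
        (⋀[R]^dd M : Submodule R (ExteriorAlgebra R M)) :=
  exteriorPower_filtration_divisibility_top_general π hπ e d Fil hFil0 hsm hlen dd
end

section
/- Let R be a discrete valuation ring with uniformizer π, let M be a free R-module with basis (e₁, …, e_h), let a₁ ≤ a₂ ≤ ⋯ ≤ a_h be natural numbers, and let N ⊆ M be the submodule generated by (π^{a₁}e₁, …, π^{a_h}e_h). Then for every 1 ≤ s ≤ h: (i) the image of the canonical map ⋀^s N → ⋀^s M is contained in π^{a₁+⋯+a_s} · ⋀^s M; and (ii) the element π^{a₁+⋯+a_s} · (e₁ ∧ ⋯ ∧ e_s) lies in this image, so the exponent a₁+⋯+a_s is optimal. -/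
/-!
`(ι N)^s` is spanned by the wedges of `s` of the generators `π^{aᵢ} eᵢ`. Such a wedge vanishes
unless its indices `g 0, …, g (s-1)` are distinct, and then it is `π^{∑ a_{g k}}` times a wedge of
basis vectors, where `∑ a_{g k} ≥ a₀ + ⋯ + a_{s-1}` because `a` is monotone. The element in (ii)
is the wedge of the first `s` generators.
-/

open Pointwise

theorem Monotone.sum_range_card_le_sum {β : Type*} [AddCommMonoid β] [PartialOrder β]
    [IsOrderedAddMonoid β] {a : ℕ → β} (ha : Monotone a) (T : Finset ℕ) :
    ∑ i ∈ Finset.range T.card, a i ≤ ∑ i ∈ T, a i := by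
  induction T using Finset.induction_on_max with
  | empty => simp
  | insert m T hlt ih =>
    have hm : m ∉ T := fun h => (hlt m h).false
    have hcard : T.card ≤ m := by
      simpa using Finset.card_le_card fun x hx => Finset.mem_range.2 (hlt x hx)
    rw [Finset.card_insert_of_notMem hm, Finset.sum_range_succ, Finset.sum_insert hm, add_comm]
    exact add_le_add (ha hcard) ih

theorem Monotone.sum_range_le_sum_comp_of_injective {β : Type*} [AddCommMonoid β]
    [PartialOrder β] [IsOrderedAddMonoid β] {a : ℕ → β} (ha : Monotone a) {s : ℕ}
    {g : Fin s → ℕ} (hg : Function.Injective g) :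
    ∑ i ∈ Finset.range s, a i ≤ ∑ i, a (g i) := by
  simpa [Finset.card_image_of_injective _ hg, Finset.sum_image hg.injOn] using
    ha.sum_range_card_le_sum (Finset.univ.image g)

namespace ExteriorAlgebra

variable {R M : Type*} [CommRing R] [AddCommGroup M] [Module R M]

theorem ιMulti_mem_pow_map_ι_s14 {P : Submodule R M} {n : ℕ} {v : Fin n → M} (hv : ∀ i, v i ∈ P) :
    ιMulti R n v ∈ P.map (ι R) ^ n :=
  Submodule.pow_subset_pow _ <| Set.mem_pow.2
    ⟨fun i => ⟨ι R (v i), Submodule.mem_map_of_mem (hv i)⟩, (ιMulti_apply v).symm⟩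

theorem pow_map_ι_span_range {κ : Type*} (w : κ → M) (n : ℕ) :
    (Submodule.span R (Set.range w)).map (ι R) ^ n =
      Submodule.span R (Set.range fun g : Fin n → κ => ιMulti R n (w ∘ g)) := by
  refine le_antisymm ?_ (Submodule.span_le.2 ?_)
  · rw [Submodule.map_span, ← Set.range_comp, Submodule.span_pow, Submodule.span_le]
    intro x hx
    obtain ⟨f, rfl⟩ := Set.mem_pow.1 hx
    choose g hg using fun i => (f i).2
    refine Submodule.subset_span ⟨g, ?_⟩
    simp only [ιMulti_apply, Function.comp_apply]
    exact congrArg List.prod (List.ofFn_inj.2 (funext hg))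
  · rintro _ ⟨g, rfl⟩
    exact ιMulti_mem_pow_map_ι_s14 fun i => Submodule.subset_span ⟨g i, rfl⟩

theorem pow_map_ι_span_smul_le {κ : Type*} (c : κ → R) (w : κ → M) (r : R) (n : ℕ)
    (hr : ∀ g : Fin n → κ, Function.Injective g → r ∣ ∏ i, c (g i)) :
    (Submodule.span R (Set.range fun i => c i • w i)).map (ι R) ^ n ≤ r • ⋀[R]^n M := by
  rw [pow_map_ι_span_range, Submodule.span_le]
  rintro _ ⟨g, rfl⟩
  change ιMulti R n (fun i => c (g i) • w (g i)) ∈ _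
  by_cases hg : Function.Injective g
  · obtain ⟨t, ht⟩ := hr g hg
    rw [AlternatingMap.map_smul_univ, ht, mul_smul]
    exact Submodule.smul_mem_pointwise_smul _ _ _
      (Submodule.smul_mem _ _ (ιMulti_range R n ⟨_, rfl⟩))
  · rw [ιMulti_eq_zero_of_not_inj fun h => hg fun i j hij => h (by simp only [hij])]
    exact zero_mem _

end ExteriorAlgebra

theorem exteriorPower_elementary_divisors_general
    {R : Type*} [CommRing R]
    (π : R)
    {M : Type*} [AddCommGroup M] [Module R M]
    (h : ℕ) (b : Module.Basis (Fin h) R M)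
    (a : ℕ → ℕ) (ha : Monotone a)
    (N : Submodule R M)
    (hN : N = Submodule.span R (Set.range fun i : Fin h => π ^ a (i : ℕ) • b i))
    (s : ℕ) (hsh : s ≤ h) :
    (Submodule.map (ExteriorAlgebra.ι R) N) ^ s ≤
      π ^ (∑ i ∈ Finset.range s, a i) •
        (⋀[R]^s M : Submodule R (ExteriorAlgebra R M)) ∧
    π ^ (∑ i ∈ Finset.range s, a i) •
        (List.ofFn fun i : Fin s => ExteriorAlgebra.ι R (b (Fin.castLE hsh i))).prod ∈
      (Submodule.map (ExteriorAlgebra.ι R) N) ^ s := by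
  subst hN
  refine ⟨ExteriorAlgebra.pow_map_ι_span_smul_le _ _ _ _ fun g hg => ?_, ?_⟩
  · rw [Finset.prod_pow_eq_pow_sum]
    exact pow_dvd_pow π (ha.sum_range_le_sum_comp_of_injective (Fin.val_injective.comp hg))
  · rw [← ExteriorAlgebra.ιMulti_apply (fun i => b (Fin.castLE hsh i)),
      ← Finset.prod_pow_eq_pow_sum, ← Fin.prod_univ_eq_prod_range (fun i => π ^ a i),
      ← AlternatingMap.map_smul_univ]
    exact ExteriorAlgebra.ιMulti_mem_pow_map_ι_s14 fun i =>
      Submodule.subset_span ⟨Fin.castLE hsh i, rfl⟩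

/-- Let `R` be a DVR with uniformizer `π`, `M` free with basis
`(e₁, …, e_h)`, `a₁ ≤ ⋯ ≤ a_h` naturals, and `N ⊆ M` the submodule generated by the
`π^{aᵢ}·eᵢ`.  Then for `1 ≤ s ≤ h`: (i) the image of the canonical map `⋀^s N → ⋀^s M`
(the submodule `(ι N)^s` of the exterior algebra) is contained in
`π^{a₁+⋯+a_s} · ⋀^s M`; and (ii) `π^{a₁+⋯+a_s} · (e₁ ∧ ⋯ ∧ e_s)` lies in this image,
so the exponent is optimal. -/
theorem exteriorPower_elementary_divisors
    {R : Type*} [CommRing R] [IsDomain R] [IsDiscreteValuationRing R]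
    (π : R) (hπ : Irreducible π)
    {M : Type*} [AddCommGroup M] [Module R M]
    (h : ℕ) (b : Module.Basis (Fin h) R M)
    (a : ℕ → ℕ) (ha : Monotone a)
    (N : Submodule R M)
    (hN : N = Submodule.span R (Set.range fun i : Fin h => π ^ a (i : ℕ) • b i))
    (s : ℕ) (hs1 : 1 ≤ s) (hsh : s ≤ h) :
    (Submodule.map (ExteriorAlgebra.ι R) N) ^ s ≤
      π ^ (∑ i ∈ Finset.range s, a i) •
        (⋀[R]^s M : Submodule R (ExteriorAlgebra R M)) ∧
    π ^ (∑ i ∈ Finset.range s, a i) •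
        (List.ofFn fun i : Fin s => ExteriorAlgebra.ι R (b (Fin.castLE hsh i))).prod ∈
      (Submodule.map (ExteriorAlgebra.ι R) N) ^ s :=
  exteriorPower_elementary_divisors_general π h b a ha N hN s hsh
end
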